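/- arXiv:1209.1291 — 4 statements merged into one kernel-verified Lean document; each statement's English description precedes it below -/
import Mathlib

section
/- Let N, M1, M2 be positive integers with M1 > N and M2 > N, and set A = min(M1, 2N) and B = min(M2, 2N). Then the region D = {(d1, d2) ∈ ℝ² : d1 ≥ 0, d2 ≥ 0, d1/A + d2/N ≤ 1, d1/N + d2/B ≤ 1} is equal to the convex hull of the four points (0,0), (N,0), (0,N), and (d1*, d2*), where d1* = N·A·(B − N)/(A·B − N²) and d2* = N·B·(A − N)/(A·B − N²). -/
/-!
The region is convex and contains the four points, which gives one inclusion. For the other,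
the ray from the origin through the corner `c` (the intersection of the two boundary lines,
which is how `(d1*, d2*)` arises) cuts the region into two triangles. Below the ray a point is
`α • (a₂, 0) + β • c` with `α, β ≥ 0`; the linear form `p.1 / a₂ + p.2 / b₂` equals `1` at both
`(a₂, 0)` and `c`, so `α + β` is its value at the point, which is at most `1`. Above the ray the
same argument, with coordinates swapped, uses `(0, b₁)` and the other line.
-/

theorem smul_add_smul_mem_convexHull_zero {E : Type*} [AddCommGroup E] [Module ℝ E]
    {u v : E} {α β : ℝ} (hα : 0 ≤ α) (hβ : 0 ≤ β) (hαβ : α + β ≤ 1) :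
    α • u + β • v ∈ convexHull ℝ {0, u, v} := by
  have h := (convex_convexHull ℝ ({0, u, v} : Set E)).sum_mem (t := Finset.univ)
    (w := ![1 - α - β, α, β]) (z := ![0, u, v])
    (fun i _ => by fin_cases i <;> simp <;> linarith)
    (by simp [Fin.sum_univ_three]; ring)
    (fun i _ => by fin_cases i <;> exact subset_convexHull ℝ _ (by simp))
  simpa [Fin.sum_univ_three] using h

def twoLineRegion (a₁ b₁ a₂ b₂ : ℝ) : Set (ℝ × ℝ) :=
  {p | 0 ≤ p.1 ∧ 0 ≤ p.2 ∧ p.1 / a₁ + p.2 / b₁ ≤ 1 ∧ p.1 / a₂ + p.2 / b₂ ≤ 1}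

theorem convex_setOf_div_add_div_le (a b : ℝ) :
    Convex ℝ {p : ℝ × ℝ | p.1 / a + p.2 / b ≤ 1} := by
  refine convex_halfSpace_le ⟨fun p q => ?_, fun t p => ?_⟩ 1
  · simp only [Prod.fst_add, Prod.snd_add]; ring
  · simp only [Prod.smul_fst, Prod.smul_snd, smul_eq_mul]; ring

theorem convex_twoLineRegion (a₁ b₁ a₂ b₂ : ℝ) : Convex ℝ (twoLineRegion a₁ b₁ a₂ b₂) :=
  (convex_halfSpace_ge (LinearMap.fst ℝ ℝ ℝ).isLinear 0).inter <|
    (convex_halfSpace_ge (LinearMap.snd ℝ ℝ ℝ).isLinear 0).inter <|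
    (convex_setOf_div_add_div_le a₁ b₁).inter (convex_setOf_div_add_div_le a₂ b₂)

theorem mem_convexHull_of_mul_le {a b x y : ℝ} {c : ℝ × ℝ} (ha : 0 < a) (hc : 0 < c.2)
    (hcab : c.1 / a + c.2 / b = 1) (hy : 0 ≤ y) (hyx : y * c.1 ≤ x * c.2)
    (hline : x / a + y / b ≤ 1) :
    (x, y) ∈ convexHull ℝ {(0, 0), (a, 0), c} := by
  set β := y / c.2
  set α := (x - β * c.1) / a
  have hα : 0 ≤ α :=
    div_nonneg (by rw [sub_nonneg, div_mul_eq_mul_div, div_le_iff₀ hc]; linarith) ha.le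
  have hαβ : α + β = x / a + y / b :=
    calc α + β = x / a + β * (1 - c.1 / a) := by simp only [α]; field_simp; ring
      _ = x / a + y / b := by rw [← hcab, add_sub_cancel_left, div_mul_div_cancel₀ hc.ne']
  have hp : (x, y) = α • (a, 0) + β • c := by
    ext
    · simp [α, div_mul_cancel₀ _ ha.ne']
    · simp [β, div_mul_cancel₀ _ hc.ne']
  rw [hp]
  exact smul_add_smul_mem_convexHull_zero hα (div_nonneg hy hc.le) (hαβ ▸ hline)

theorem mem_convexHull_of_le_mul {a b x y : ℝ} {c : ℝ × ℝ} (hb : 0 < b) (hc : 0 < c.1)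
    (hcab : c.1 / a + c.2 / b = 1) (hx : 0 ≤ x) (hxy : x * c.2 ≤ y * c.1)
    (hline : x / a + y / b ≤ 1) :
    (x, y) ∈ convexHull ℝ {(0, 0), (0, b), c} := by
  have h := mem_convexHull_of_mul_le (c := c.swap) hb hc (by rwa [add_comm]) hx hxy
    (by rwa [add_comm])
  have := Set.mem_image_of_mem (LinearEquiv.prodComm ℝ ℝ ℝ).toLinearMap h
  rw [LinearMap.image_convexHull] at this
  simpa [Set.image_insert_eq] using this

theorem twoLineRegion_eq_convexHull {a₁ b₁ a₂ b₂ : ℝ} {c : ℝ × ℝ}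
    (ha₂ : 0 < a₂) (ha : a₂ ≤ a₁) (hb₁ : 0 < b₁) (hb : b₁ ≤ b₂)
    (hc₁ : 0 < c.1) (hc₂ : 0 < c.2)
    (hc_line₁ : c.1 / a₁ + c.2 / b₁ = 1) (hc_line₂ : c.1 / a₂ + c.2 / b₂ = 1) :
    twoLineRegion a₁ b₁ a₂ b₂ = convexHull ℝ {(0, 0), (a₂, 0), (0, b₁), c} := by
  refine subset_antisymm ?_ (convexHull_min ?_ (convex_twoLineRegion a₁ b₁ a₂ b₂))
  · rintro ⟨x, y⟩ ⟨hx, hy, h₁, h₂⟩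
    rcases le_total (y * c.1) (x * c.2) with hyx | hxy
    · exact convexHull_mono (Set.insert_subset_insert (Set.insert_subset_insert
        (Set.subset_insert _ _))) (mem_convexHull_of_mul_le ha₂ hc₂ hc_line₂ hy hyx h₂)
    · exact convexHull_mono (Set.insert_subset_insert (Set.subset_insert _ _))
        (mem_convexHull_of_le_mul hb₁ hc₁ hc_line₁ hx hxy h₁)
  · have ha₁ : a₂ / a₁ ≤ 1 := div_le_one_of_le₀ ha (ha₂.trans_le ha).le
    have hb₂ : b₁ / b₂ ≤ 1 := div_le_one_of_le₀ hb (hb₁.trans_le hb).le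
    rintro p (rfl | rfl | rfl | rfl)
    · simp [twoLineRegion]
    · simp [twoLineRegion, ha₂.le, ha₂.ne', ha₁]
    · simp [twoLineRegion, hb₁.le, hb₁.ne', hb₂]
    · exact ⟨hc₁.le, hc₂.le, hc_line₁.le, hc_line₂.le⟩

/-- The DoF region of the (M1, M2, N, N) MIMO IC with no CSIT and full-duplex
receiver cooperation (M1, M2 > N) is the convex hull of (0,0), (N,0), (0,N)
and the retro-cooperative interference alignment corner point. -/
theorem stmt_1 (N M1 M2 : ℕ) (hN : 0 < N) (hM1 : N < M1) (hM2 : N < M2)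
    (A B d1star d2star : ℝ)
    (hA : A = min (M1 : ℝ) (2 * N)) (hB : B = min (M2 : ℝ) (2 * N))
    (hd1 : d1star = N * A * (B - N) / (A * B - N ^ 2))
    (hd2 : d2star = N * B * (A - N) / (A * B - N ^ 2)) :
    {p : ℝ × ℝ | 0 ≤ p.1 ∧ 0 ≤ p.2 ∧ p.1 / A + p.2 / N ≤ 1 ∧ p.1 / N + p.2 / B ≤ 1}
      = convexHull ℝ {((0 : ℝ), (0 : ℝ)), ((N : ℝ), 0), (0, (N : ℝ)), (d1star, d2star)} := by
  have hN₀ : (0 : ℝ) < N := by exact_mod_cast hN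
  have hNA : (N : ℝ) < A := hA ▸ lt_min (by exact_mod_cast hM1) (by linarith)
  have hNB : (N : ℝ) < B := hB ▸ lt_min (by exact_mod_cast hM2) (by linarith)
  have hA₀ : 0 < A := hN₀.trans hNA
  have hB₀ : 0 < B := hN₀.trans hNB
  have hden : 0 < A * B - N ^ 2 := by nlinarith
  subst hd1 hd2
  refine twoLineRegion_eq_convexHull hN₀ hNA.le hN₀ hNB.le ?_ ?_ ?_ ?_
  · exact div_pos (mul_pos (mul_pos hN₀ hA₀) (sub_pos.2 hNB)) hden
  · exact div_pos (mul_pos (mul_pos hN₀ hB₀) (sub_pos.2 hNA)) hden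
  · field_simp; ring
  · field_simp; ring
end

section
/- Let N, M1, M2 be positive integers with M1 > N and M2 > N, and set A = min(M1, 2N) and B = min(M2, 2N). Over the region D = {(d1, d2) ∈ ℝ² : d1 ≥ 0, d2 ≥ 0, d1/A + d2/N ≤ 1, d1/N + d2/B ≤ 1}, the maximum value of d1 + d2 equals N·(2·A·B − N·(A + B))/(A·B − N²); it is attained at the point (N·A·(B − N)/(A·B − N²), N·B·(A − N)/(A·B − N²)); and this maximum is strictly greater than N. -/
/-!
Clearing denominators, the two constraints of the region read `n x + a y ≤ a n` and
`b x + n y ≤ n b`. The corner point is the intersection of the two constraint lines, and the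
identity `(a b - n²)(x + y) = (b - n)(n x + a y) + (a - n)(b x + n y)` combines the constraints
with nonnegative weights into the bound `x + y ≤ n (2 a b - n (a + b)) / (a b - n²)`, attained
at the corner. The excess of this value over `n` is `n (a - n)(b - n) / (a b - n²) > 0`.
-/

namespace DoFRegion

def region (n a b : ℝ) : Set (ℝ × ℝ) :=
  {p | 0 ≤ p.1 ∧ 0 ≤ p.2 ∧ p.1 / a + p.2 / n ≤ 1 ∧ p.1 / n + p.2 / b ≤ 1}

noncomputable def corner (n a b : ℝ) : ℝ × ℝ :=
  (n * a * (b - n) / (a * b - n ^ 2), n * b * (a - n) / (a * b - n ^ 2))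

lemma div_add_div_le_one_iff {a c x y : ℝ} (ha : 0 < a) (hc : 0 < c) :
    x / a + y / c ≤ 1 ↔ x * c + a * y ≤ a * c := by
  rw [div_add_div _ _ ha.ne' hc.ne', div_le_one (mul_pos ha hc)]

lemma corner_fst_add_snd (n a b : ℝ) :
    (corner n a b).1 + (corner n a b).2 = n * (2 * a * b - n * (a + b)) / (a * b - n ^ 2) := by
  rw [corner, ← add_div]
  ring

section

variable {n a b : ℝ}

lemma sq_lt_mul_of_lt (hn : 0 < n) (ha : n < a) (hb : n < b) : n ^ 2 < a * b := by
  nlinarith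

lemma corner_mem_region (hn : 0 < n) (ha : n < a) (hb : n < b) :
    corner n a b ∈ region n a b := by
  have hab : 0 < a * b - n ^ 2 := sub_pos.2 (sq_lt_mul_of_lt hn ha hb)
  have ha0 : 0 < a := hn.trans ha
  have hb0 : 0 < b := hn.trans hb
  refine ⟨div_nonneg ?_ hab.le, div_nonneg ?_ hab.le, le_of_eq ?_, le_of_eq ?_⟩
  · have := sub_pos.2 hb
    positivity
  · have := sub_pos.2 ha
    positivity
  all_goals
    have := hab.ne'
    simp only [corner]
    field_simp
    ring

lemma fst_add_snd_le_of_mem_region (hn : 0 < n) (ha : n < a) (hb : n < b) {p : ℝ × ℝ}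
    (hp : p ∈ region n a b) :
    p.1 + p.2 ≤ n * (2 * a * b - n * (a + b)) / (a * b - n ^ 2) := by
  obtain ⟨-, -, h₁, h₂⟩ := hp
  rw [div_add_div_le_one_iff (hn.trans ha) hn] at h₁
  rw [div_add_div_le_one_iff hn (hn.trans hb)] at h₂
  rw [le_div_iff₀ (sub_pos.2 (sq_lt_mul_of_lt hn ha hb))]
  calc (p.1 + p.2) * (a * b - n ^ 2)
      = (b - n) * (p.1 * n + a * p.2) + (a - n) * (p.1 * b + n * p.2) := by ring
    _ ≤ (b - n) * (a * n) + (a - n) * (n * b) := by gcongr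
    _ = n * (2 * a * b - n * (a + b)) := by ring

lemma lt_corner_sum (hn : 0 < n) (ha : n < a) (hb : n < b) :
    n < n * (2 * a * b - n * (a + b)) / (a * b - n ^ 2) := by
  rw [lt_div_iff₀ (sub_pos.2 (sq_lt_mul_of_lt hn ha hb))]
  nlinarith [mul_pos hn (mul_pos (sub_pos.2 ha) (sub_pos.2 hb))]

end

end DoFRegion

/-- Sum-DoF maximization over the DoF region of the (M1, M2, N, N) MIMO IC with
no CSIT and full-duplex receiver cooperation (M1, M2 > N): the maximum of
d1 + d2 equals N(2AB - N(A+B))/(AB - N²), is attained at the corner point, and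
strictly exceeds N (the sum-DoF without receiver cooperation). -/
theorem stmt_2 (N M1 M2 : ℕ) (hN : 0 < N) (hM1 : N < M1) (hM2 : N < M2)
    (A B : ℝ)
    (hA : A = min (M1 : ℝ) (2 * N)) (hB : B = min (M2 : ℝ) (2 * N))
    (D : Set (ℝ × ℝ))
    (hD : D = {p : ℝ × ℝ | 0 ≤ p.1 ∧ 0 ≤ p.2 ∧
      p.1 / A + p.2 / N ≤ 1 ∧ p.1 / N + p.2 / B ≤ 1}) :
    IsGreatest ((fun p : ℝ × ℝ => p.1 + p.2) '' D)
        (N * (2 * A * B - N * (A + B)) / (A * B - N ^ 2)) ∧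
      (N * A * (B - N) / (A * B - N ^ 2), N * B * (A - N) / (A * B - N ^ 2)) ∈ D ∧
      N * A * (B - N) / (A * B - N ^ 2) + N * B * (A - N) / (A * B - N ^ 2)
        = N * (2 * A * B - N * (A + B)) / (A * B - N ^ 2) ∧
      (N : ℝ) < N * (2 * A * B - N * (A + B)) / (A * B - N ^ 2) := by
  have hn : (0 : ℝ) < N := by exact_mod_cast hN
  have hNA : (N : ℝ) < A := hA ▸ lt_min (by exact_mod_cast hM1) (by linarith)
  have hNB : (N : ℝ) < B := hB ▸ lt_min (by exact_mod_cast hM2) (by linarith)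
  have hD : D = DoFRegion.region N A B := hD
  have hmem := DoFRegion.corner_mem_region hn hNA hNB
  have hsum := DoFRegion.corner_fst_add_snd (N : ℝ) A B
  subst hD
  refine ⟨⟨⟨_, hmem, hsum⟩, ?_⟩, hmem, hsum, DoFRegion.lt_corner_sum hn hNA hNB⟩
  rintro _ ⟨p, hp, rfl⟩
  exact DoFRegion.fst_add_snd_le_of_mem_region hn hNA hNB hp
end

section
/- Let N, M be positive integers with M > N, and set M' = min(M, 2N). Over the region D = {(d1, d2) ∈ ℝ² : d1 ≥ 0, d2 ≥ 0, d1/M' + d2/N ≤ 1, d1/N + d2/M' ≤ 1}, the maximum value of d1 + d2 equals 2·M'·N/(M' + N); it is attained at (Q, Q) with Q = M'·N/(M' + N); and this maximum is strictly greater than N. -/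
/-!
Adding the two weighted constraints gives `(d₁ + d₂)(1/M' + 1/N) ≤ 2`, i.e. `d₁ + d₂` is at most
the harmonic mean `2M'N/(M' + N)` of `M'` and `N`. The bound is attained at the symmetric point
where both constraints are tight, and the harmonic mean of two distinct positive numbers exceeds
the smaller one, here `N < M'`.
-/

def symmetricRegion (a b : ℝ) : Set (ℝ × ℝ) :=
  {p | 0 ≤ p.1 ∧ 0 ≤ p.2 ∧ p.1 / a + p.2 / b ≤ 1 ∧ p.1 / b + p.2 / a ≤ 1}

section SymmetricRegion

variable {a b : ℝ}

lemma div_add_div_eq_one_of_harmonic (ha : 0 < a) (hb : 0 < b) :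
    a * b / (a + b) / a + a * b / (a + b) / b = 1 := by
  field_simp
  ring

lemma harmonic_mem_symmetricRegion (ha : 0 < a) (hb : 0 < b) :
    (a * b / (a + b), a * b / (a + b)) ∈ symmetricRegion a b := by
  have hsum := div_add_div_eq_one_of_harmonic ha hb
  refine ⟨by positivity, by positivity, hsum.le, ?_⟩
  linarith

lemma add_le_of_mem_symmetricRegion (ha : 0 < a) (hb : 0 < b) {p : ℝ × ℝ}
    (hp : p ∈ symmetricRegion a b) : p.1 + p.2 ≤ 2 * a * b / (a + b) := by
  obtain ⟨-, -, h₁, h₂⟩ := hp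
  have hcombined : (p.1 + p.2) * ((a + b) / (a * b)) ≤ 2 := by
    have : (p.1 + p.2) * ((a + b) / (a * b)) = (p.1 / a + p.2 / b) + (p.1 / b + p.2 / a) := by
      field_simp
      ring
    linarith
  calc p.1 + p.2 = (p.1 + p.2) * ((a + b) / (a * b)) * (a * b / (a + b)) := by
        field_simp
    _ ≤ 2 * (a * b / (a + b)) := by gcongr
    _ = 2 * a * b / (a + b) := by ring

lemma isGreatest_add_image_symmetricRegion (ha : 0 < a) (hb : 0 < b) :
    IsGreatest ((fun p : ℝ × ℝ => p.1 + p.2) '' symmetricRegion a b) (2 * a * b / (a + b)) :=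
  ⟨⟨_, harmonic_mem_symmetricRegion ha hb, by ring⟩,
    by rintro _ ⟨p, hp, rfl⟩; exact add_le_of_mem_symmetricRegion ha hb hp⟩

end SymmetricRegion

lemma lt_two_mul_mul_div_add {a b : ℝ} (hb : 0 < b) (hba : b < a) :
    b < 2 * a * b / (a + b) := by
  rw [lt_div_iff₀ (by linarith)]
  nlinarith

/-- Sum-DoF maximization over the DoF region of the (M, N, N) MIMO BC with no
CSIT and full-duplex receiver cooperation (M > N): the maximum of d1 + d2 is
2M'N/(M'+N), attained at (Q, Q), and strictly exceeds N. -/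
theorem stmt_5 (N M : ℕ) (hN : 0 < N) (hM : N < M)
    (M' Q : ℝ) (hM' : M' = min (M : ℝ) (2 * N))
    (hQ : Q = M' * N / (M' + N))
    (D : Set (ℝ × ℝ))
    (hD : D = {p : ℝ × ℝ | 0 ≤ p.1 ∧ 0 ≤ p.2 ∧
      p.1 / M' + p.2 / N ≤ 1 ∧ p.1 / N + p.2 / M' ≤ 1}) :
    IsGreatest ((fun p : ℝ × ℝ => p.1 + p.2) '' D) (2 * M' * N / (M' + N)) ∧
      (Q, Q) ∈ D ∧ Q + Q = 2 * M' * N / (M' + N) ∧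
      (N : ℝ) < 2 * M' * N / (M' + N) := by
  have hN_pos : (0 : ℝ) < N := by exact_mod_cast hN
  have hN_lt : (N : ℝ) < M' := hM' ▸ lt_min (by exact_mod_cast hM) (by linarith)
  have hM'_pos : 0 < M' := hN_pos.trans hN_lt
  subst hQ hD
  exact ⟨isGreatest_add_image_symmetricRegion hM'_pos hN_pos,
    harmonic_mem_symmetricRegion hM'_pos hN_pos, by ring, lt_two_mul_mul_div_add hN_pos hN_lt⟩
end

section
/- Let N, M1, M2 be positive integers with M1 > N and M2 > N, and set A = min(M1, 2N) and B = min(M2, 2N). Then the region D0 = {(d1, d2) ∈ ℝ² : d1 ≥ 0, d2 ≥ 0, d1 + d2 ≤ N} is a strict subset of the region D = {(d1, d2) ∈ ℝ² : d1 ≥ 0, d2 ≥ 0, d1/A + d2/N ≤ 1, d1/N + d2/B ≤ 1}; in particular the point (N·A·(B − N)/(A·B − N²), N·B·(A − N)/(A·B − N²)) belongs to D but not to D0. -/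
/-!
Every point of the simplex `d₁ + d₂ ≤ N` satisfies both constraints of `D`, because
`A, B > N` only loosens them. The two constraint lines of `D` meet at the given corner
point, whose coordinate sum exceeds `N` by `N (A - N) (B - N) / (A B - N²) > 0`.
-/

def noCoopRegion (n : ℝ) : Set (ℝ × ℝ) :=
  {p | 0 ≤ p.1 ∧ 0 ≤ p.2 ∧ p.1 + p.2 ≤ n}

def coopRegion (n a b : ℝ) : Set (ℝ × ℝ) :=
  {p | 0 ≤ p.1 ∧ 0 ≤ p.2 ∧ p.1 / a + p.2 / n ≤ 1 ∧ p.1 / n + p.2 / b ≤ 1}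

noncomputable def coopCorner (n a b : ℝ) : ℝ × ℝ :=
  (n * a * (b - n) / (a * b - n ^ 2), n * b * (a - n) / (a * b - n ^ 2))

section

variable {n a b : ℝ}

theorem noCoopRegion_subset_coopRegion (hn : 0 < n) (ha : n ≤ a) (hb : n ≤ b) :
    noCoopRegion n ⊆ coopRegion n a b := by
  rintro ⟨x, y⟩ ⟨hx, hy, hxy⟩
  have hxa : x / a ≤ x / n := div_le_div_of_nonneg_left hx hn ha
  have hyb : y / b ≤ y / n := div_le_div_of_nonneg_left hy hn hb
  have hsum : x / n + y / n ≤ 1 := by rwa [← add_div, div_le_one hn]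
  exact ⟨hx, hy, by dsimp only; linarith, by dsimp only; linarith⟩

theorem coopCorner_pos (hn : 0 < n) (ha : n < a) (hb : n < b) :
    0 < (coopCorner n a b).1 ∧ 0 < (coopCorner n a b).2 := by
  have hden : 0 < a * b - n ^ 2 := by nlinarith
  have ha0 : 0 < a := hn.trans ha
  have hb0 : 0 < b := hn.trans hb
  exact ⟨div_pos (mul_pos (mul_pos hn ha0) (sub_pos.mpr hb)) hden,
    div_pos (mul_pos (mul_pos hn hb0) (sub_pos.mpr ha)) hden⟩

theorem coopCorner_mem_coopRegion (hn : 0 < n) (ha : n < a) (hb : n < b) :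
    coopCorner n a b ∈ coopRegion n a b := by
  obtain ⟨hx, hy⟩ := coopCorner_pos hn ha hb
  have hden : a * b - n ^ 2 ≠ 0 := by nlinarith
  have ha0 : a ≠ 0 := by linarith
  have hb0 : b ≠ 0 := by linarith
  refine ⟨hx.le, hy.le, le_of_eq ?_, le_of_eq ?_⟩ <;>
  · unfold coopCorner
    field_simp
    ring

theorem coopCorner_fst_add_snd_sub (hn : n ≠ 0) (hden : a * b - n ^ 2 ≠ 0) :
    (coopCorner n a b).1 + (coopCorner n a b).2 - n
      = n * (a - n) * (b - n) / (a * b - n ^ 2) := by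
  unfold coopCorner
  field_simp
  ring

theorem coopCorner_notMem_noCoopRegion (hn : 0 < n) (ha : n < a) (hb : n < b) :
    coopCorner n a b ∉ noCoopRegion n := by
  have hden : 0 < a * b - n ^ 2 := by nlinarith
  have hexcess : 0 < (coopCorner n a b).1 + (coopCorner n a b).2 - n := by
    rw [coopCorner_fst_add_snd_sub hn.ne' hden.ne']
    exact div_pos (mul_pos (mul_pos hn (sub_pos.mpr ha)) (sub_pos.mpr hb)) hden
  rintro ⟨-, -, hsum⟩
  linarith

theorem noCoopRegion_ssubset_coopRegion (hn : 0 < n) (ha : n < a) (hb : n < b) :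
    noCoopRegion n ⊂ coopRegion n a b :=
  (noCoopRegion_subset_coopRegion hn ha.le hb.le).ssubset_of_not_subset
    fun h ↦ coopCorner_notMem_noCoopRegion hn ha hb (h (coopCorner_mem_coopRegion hn ha hb))

end

/-- Full-duplex receiver cooperation strictly enlarges the DoF region of the
(M1, M2, N, N) MIMO IC with no CSIT when M1, M2 > N: the no-cooperation region
D0 is a strict subset of the cooperation region D, with the corner point of D
witnessing strictness. -/
theorem stmt_13 (N M1 M2 : ℕ) (hN : 0 < N) (hM1 : N < M1) (hM2 : N < M2)
    (A B : ℝ)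
    (hA : A = min (M1 : ℝ) (2 * N)) (hB : B = min (M2 : ℝ) (2 * N))
    (D0 D : Set (ℝ × ℝ))
    (hD0 : D0 = {p : ℝ × ℝ | 0 ≤ p.1 ∧ 0 ≤ p.2 ∧ p.1 + p.2 ≤ (N : ℝ)})
    (hD : D = {p : ℝ × ℝ | 0 ≤ p.1 ∧ 0 ≤ p.2 ∧
      p.1 / A + p.2 / N ≤ 1 ∧ p.1 / N + p.2 / B ≤ 1}) :
    D0 ⊂ D ∧
      (N * A * (B - N) / (A * B - N ^ 2), N * B * (A - N) / (A * B - N ^ 2)) ∈ D ∧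
      (N * A * (B - N) / (A * B - N ^ 2), N * B * (A - N) / (A * B - N ^ 2)) ∉ D0 := by
  have hN' : (0 : ℝ) < N := by exact_mod_cast hN
  have hNA : (N : ℝ) < A := hA ▸ lt_min (by exact_mod_cast hM1) (by linarith)
  have hNB : (N : ℝ) < B := hB ▸ lt_min (by exact_mod_cast hM2) (by linarith)
  subst hD0 hD
  exact ⟨noCoopRegion_ssubset_coopRegion hN' hNA hNB, coopCorner_mem_coopRegion hN' hNA hNB,
    coopCorner_notMem_noCoopRegion hN' hNA hNB⟩
end
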